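/- Assume a well-defined ADT in which every sort contains at least two constructor terms, and let C = σ¹ → f¹ → σ² → f² → ⋯ → fⁿ → σ¹ be a simple cycle in the dependency graph D such that C is the only path from σ¹ to itself (every cycle starting and ending in σ¹ is a repetition of C) and all constructors f¹, …, fⁿ on C are unary. Then the size image of σ¹ satisfies 𝕊_{σ¹} = ℕ·n + ⋃_{i=1}^{n} (𝕊^{fⁱ}_{σⁱ} + (i−1)). -/

import Mathlib

/-! A term of sort `σⁱ` either does not start with `fⁱ`, or it is `fⁱ` applied to a single term
of sort `σⁱ⁺¹`, and is one larger. Hence `𝕊_{σⁱ} = 𝕊^{fⁱ}_{σⁱ} ∪ (𝕊_{σⁱ⁺¹} + 1)` with indices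
taken around the cycle. Unfolding this recurrence from `σ¹`, every size is `k + s` with `s` in the
relativised size image at the position reached after `k` steps, and `k = j·n + (i − 1)`. -/

structure ADTSig where
  numSorts : ℕ
  numCtors : ℕ
  ctorArgs : Fin numCtors → List (Fin numSorts)
  ctorRes : Fin numCtors → Fin numSorts

namespace ADTSig

inductive Term (S : ADTSig) : Fin S.numSorts → Type where
  | mk (f : Fin S.numCtors)
      (args : (i : Fin (S.ctorArgs f).length) → Term S ((S.ctorArgs f).get i)) :
      Term S (S.ctorRes f)

def Term.size {S : ADTSig} : {σ : Fin S.numSorts} → Term S σ → ℕ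
  | _, .mk _ args => 1 + ∑ i, (args i).size

def Term.head {S : ADTSig} : {σ : Fin S.numSorts} → Term S σ → Fin S.numCtors
  | _, .mk f _ => f

def WellDefined (S : ADTSig) : Prop := ∀ σ, Nonempty (S.Term σ)

def ExpandingSort (S : ADTSig) (σ : Fin S.numSorts) : Prop :=
  ∀ n : ℕ, ∃ b : ℕ, ∀ b' ≥ b,
    (∀ t : S.Term σ, t.size ≠ b') ∨ n ≤ Nat.card {t : S.Term σ // t.size = b'}

def ExpandingADT (S : ADTSig) : Prop := ∀ σ, ExpandingSort S σ

/-- The size image `𝕊_σ`. -/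
def SizeImage (S : ADTSig) (σ : Fin S.numSorts) : Set ℕ :=
  {b | ∃ t : S.Term σ, t.size = b}

/-- The relativised size image `𝕊^f_σ`: sizes of terms not starting with `f`. -/
def RelSizeImage (S : ADTSig) (σ : Fin S.numSorts) (f : Fin S.numCtors) : Set ℕ :=
  {b | ∃ t : S.Term σ, t.head ≠ f ∧ t.size = b}

/-- Vertices of the bipartite dependency graph: sorts and constructors. -/
abbrev DepVertex (S : ADTSig) := Sum (Fin S.numSorts) (Fin S.numCtors)

/-- Edges of the dependency graph `D`: `(σ₀, f)` for every constructor `f`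
with result sort `σ₀`, and `(f, σ_j)` for every argument sort `σ_j` of `f`. -/
def DepEdge (S : ADTSig) : DepVertex S → DepVertex S → Prop
  | .inl σ, .inr f => S.ctorRes f = σ
  | .inr f, .inl σ => σ ∈ S.ctorArgs f
  | .inl _, .inl _ => False
  | .inr _, .inr _ => False

/-- `l` is a (nonempty) path in `D` from `σ` to itself: a closed walk. -/
def IsClosedWalk (S : ADTSig) (σ : Fin S.numSorts) (l : List (DepVertex S)) : Prop :=
  l ≠ [] ∧ List.Chain (DepEdge S) (Sum.inl σ) l ∧ l.getLast? = some (Sum.inl σ)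

/-- The vertex list (after the starting vertex `σ¹ = ss 0`) of the cycle
`σ¹ → f¹ → σ² → f² → ⋯ → fⁿ → σ¹` given by `ss`, `fs`. -/
def cycleList (S : ADTSig) (n : ℕ) (ss : Fin (n + 1) → Fin S.numSorts)
    (fs : Fin (n + 1) → Fin S.numCtors) : List (DepVertex S) :=
  ((List.finRange (n + 1)).map (fun i => [Sum.inr (fs i), Sum.inl (ss (i + 1))])).flatten

end ADTSig

namespace ADTSig

variable {S : ADTSig}

theorem Term.exists_size_eq_add_one_of_head_eq {f : Fin S.numCtors}
    (hf : (S.ctorArgs f).length = 1) {σ : Fin S.numSorts} (t : S.Term σ) (ht : t.head = f) :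
    ∃ u : S.Term ((S.ctorArgs f).get ⟨0, by omega⟩), t.size = u.size + 1 := by
  cases t with
  | mk g args =>
    obtain rfl : g = f := ht
    have : Subsingleton (Fin (S.ctorArgs g).length) := Fin.subsingleton_iff_le_one.mpr hf.le
    exact ⟨args _, by rw [Term.size, Fintype.sum_subsingleton _ ⟨0, by omega⟩, add_comm]⟩

theorem Term.exists_size_eq_add_one {f : Fin S.numCtors}
    (hf : (S.ctorArgs f).length = 1) (u : S.Term ((S.ctorArgs f).get ⟨0, by omega⟩)) :
    ∃ t : S.Term (S.ctorRes f), t.size = u.size + 1 := by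
  have : Subsingleton (Fin (S.ctorArgs f).length) := Fin.subsingleton_iff_le_one.mpr hf.le
  refine ⟨.mk f fun i => Subsingleton.elim ⟨0, by omega⟩ i ▸ u, ?_⟩
  rw [Term.size, Fintype.sum_subsingleton _ ⟨0, by omega⟩, add_comm]

theorem sizeImage_eq_relSizeImage_union_of_ctorArgs_eq {f : Fin S.numCtors}
    {σ τ : Fin S.numSorts} (hres : S.ctorRes f = σ) (hargs : S.ctorArgs f = [τ]) :
    S.SizeImage σ = S.RelSizeImage σ f ∪ (· + 1) '' S.SizeImage τ := by
  subst hres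
  have hf : (S.ctorArgs f).length = 1 := by simp [hargs]
  have hτ : (S.ctorArgs f).get ⟨0, by omega⟩ = τ := by simp [hargs]
  rw [← hτ]
  ext m
  constructor
  · rintro ⟨t, rfl⟩
    by_cases ht : t.head = f
    · obtain ⟨u, hu⟩ := Term.exists_size_eq_add_one_of_head_eq hf t ht
      exact Or.inr ⟨u.size, ⟨u, rfl⟩, hu.symm⟩
    · exact Or.inl ⟨t, ht, rfl⟩
  · rintro (⟨t, -, rfl⟩ | ⟨_, ⟨u, rfl⟩, rfl⟩)
    · exact ⟨t, rfl⟩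
    · exact Term.exists_size_eq_add_one hf u

end ADTSig

theorem Set.mem_iff_exists_iterate_of_eq_union_image_add_one {ι : Type*} (next : ι → ι)
    {A R : ι → Set ℕ} (hA : ∀ i, A i = R i ∪ (· + 1) '' A (next i)) (i : ι) (m : ℕ) :
    m ∈ A i ↔ ∃ k, ∃ s ∈ R (next^[k] i), m = k + s := by
  constructor
  · induction m using Nat.strong_induction_on generalizing i with
    | _ m ih =>
      rw [hA]
      rintro (hm | ⟨m', hm', rfl⟩)
      · exact ⟨0, m, hm, (zero_add m).symm⟩
      · obtain ⟨k, s, hs, rfl⟩ := ih m' (lt_add_one m') (next i) hm'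
        exact ⟨k + 1, s, hs, by ring⟩
  · rintro ⟨k, s, hs, rfl⟩
    induction k generalizing i with
    | zero => rw [hA]; exact Or.inl (by simpa using hs)
    | succ k ih =>
      rw [hA]
      exact Or.inr ⟨k + s, ih (next i) hs, by ring⟩

theorem Fin.iterate_add_one_zero (n k : ℕ) :
    (· + 1 : Fin (n + 1) → Fin (n + 1))^[k] 0 = Fin.ofNat (n + 1) k := by
  induction k with
  | zero => rfl
  | succ k ih =>
    rw [Function.iterate_succ_apply', ih]
    ext
    simp [Fin.val_add, Nat.add_mod]

theorem Fin.exists_ofNat_iff_exists_mul_add (n : ℕ) (P : Fin (n + 1) → ℕ → Prop) :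
    (∃ k, P (Fin.ofNat (n + 1) k) k) ↔ ∃ j, ∃ i : Fin (n + 1), P i (j * (n + 1) + i) := by
  constructor
  · rintro ⟨k, hk⟩
    refine ⟨k / (n + 1), Fin.ofNat (n + 1) k, ?_⟩
    rwa [Fin.val_ofNat, Nat.div_add_mod']
  · rintro ⟨j, i, hi⟩
    refine ⟨j * (n + 1) + i, ?_⟩
    convert hi
    ext
    simp [Nat.add_mod, Nat.mod_eq_of_lt i.isLt]

open ADTSig in
theorem size_image_of_only_cycle_general (S : ADTSig)
    (n : ℕ) (ss : Fin (n + 1) → Fin S.numSorts)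
    (fs : Fin (n + 1) → Fin S.numCtors)
    (hcyc : ∀ i, S.ctorRes (fs i) = ss i ∧ ss (i + 1) ∈ S.ctorArgs (fs i))
    (hunary : ∀ i, (S.ctorArgs (fs i)).length = 1) :
    SizeImage S (ss 0) =
      {m | ∃ j : ℕ, ∃ i : Fin (n + 1),
         ∃ s ∈ RelSizeImage S (ss i) (fs i), m = j * (n + 1) + (s + i.val)} := by
  have hargs (i : Fin (n + 1)) : S.ctorArgs (fs i) = [ss (i + 1)] := by
    obtain ⟨τ, hτ⟩ := List.length_eq_one_iff.mp (hunary i)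
    simpa [hτ, eq_comm] using (hcyc i).2
  have hrec (i : Fin (n + 1)) :=
    sizeImage_eq_relSizeImage_union_of_ctorArgs_eq (hcyc i).1 (hargs i)
  ext m
  rw [Set.mem_iff_exists_iterate_of_eq_union_image_add_one _ hrec]
  simp only [Fin.iterate_add_one_zero, Set.mem_ofPred_eq]
  rw [Fin.exists_ofNat_iff_exists_mul_add n
    fun i k => ∃ s ∈ S.RelSizeImage (ss i) (fs i), m = k + s]
  exact exists_congr fun j => exists_congr fun i => exists_congr fun s =>
    and_congr_right fun _ => by omega

open ADTSig in
/-- If `C = σ¹ → f¹ → ⋯ → fⁿ → σ¹` is a simple cycle in the dependency graph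
of a well-defined ADT in which every sort has at least two constructor terms,
`C` is the only path from `σ¹` to itself, and all constructors on `C` are
unary, then `𝕊_{σ¹} = ℕ·n + ⋃_{i=1}^{n} (𝕊^{fⁱ}_{σⁱ} + (i − 1))` (here the
cycle has length `n + 1`, and `σ¹ = ss 0`). -/
theorem size_image_of_only_cycle (S : ADTSig) (hS : S.WellDefined)
    (h2 : ∀ σ, ∃ t₁ t₂ : S.Term σ, t₁ ≠ t₂)
    (n : ℕ) (ss : Fin (n + 1) → Fin S.numSorts)
    (fs : Fin (n + 1) → Fin S.numCtors)
    (hcyc : ∀ i, S.ctorRes (fs i) = ss i ∧ ss (i + 1) ∈ S.ctorArgs (fs i))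
    (hsimple : Function.Injective ss)
    (honly : ∀ l, IsClosedWalk S (ss 0) l →
       ∃ k, l = (List.replicate k (cycleList S n ss fs)).flatten)
    (hunary : ∀ i, (S.ctorArgs (fs i)).length = 1) :
    SizeImage S (ss 0) =
      {m | ∃ j : ℕ, ∃ i : Fin (n + 1),
         ∃ s ∈ RelSizeImage S (ss i) (fs i), m = j * (n + 1) + (s + i.val)} :=
  size_image_of_only_cycle_general S n ss fs hcyc hunary
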